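/- The column sums of the array c satisfy ∑_{l=1}^∞ c(l,k) = 4/k^2 + O(ln^2 k / k^3); precisely, there is a constant C > 0 such that |∑_{l=1}^∞ c(l,k) − 4/k^2| ≤ C·ln^2 k / k^3 for all integers k ≥ 2. -/

import Mathlib

open scoped Classical

/-- The constants `c(l,k)`: `c(l,0) = c(0,k) = 0`,
`c(1,k) = (2k²+14k)/((k+1)(k+2)(k+3)(k+4))` for `k ≥ 1`, and for `l > 1`, `k > 0`,
`c(l,k) = c(l,k-1)·(l+k-1)/(2l+k+2) + c(l-1,k)·(l-1)/(2l+k+2)`. -/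
noncomputable def c : ℕ → ℕ → ℝ
  | _, 0 => 0
  | 0, _ => 0
  | 1, k + 1 =>
      (2 * ((k : ℝ) + 1) ^ 2 + 14 * ((k : ℝ) + 1)) /
        (((k : ℝ) + 2) * ((k : ℝ) + 3) * ((k : ℝ) + 4) * ((k : ℝ) + 5))
  | l + 2, k + 1 =>
      c (l + 2) k * ((l : ℝ) + (k : ℝ) + 2) / (2 * (l : ℝ) + (k : ℝ) + 7) +
      c (l + 1) (k + 1) * ((l : ℝ) + 1) / (2 * (l : ℝ) + (k : ℝ) + 7)
termination_by l k => (l, k)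

/-!
Write `moment p k = ∑_{l ≥ 1} p(l) c(l,k)` for a polynomial weight `p`, and `Mₘ(k)` for the
weight `Xᵐ`; these sums converge because `c(l,k)` decays geometrically in `l`. Weighting the
recurrence by `p` and summing over `l` relates the moments of columns `k` and `k + 1`, and for
`p = 1, X, X²` these relations telescope in `k`. The identities for `X` and `X²` give
`∑_j M₁(j) ≤ 2` and `k M₂(k) ≤ 4`, and then `k² M₁(k) = O(log k)`. The identity for `1` then
shows `(k + 1)(k + 2)(1 - ∑_{j ≤ k} M₀(j)) = 4k + O(log² k)`, and taking differences in `k`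
gives `M₀(k) = 4/k² + O(log² k / k³)`.
-/

open Polynomial Finset Filter

lemma c_zero_right (l : ℕ) : c l 0 = 0 := c.eq_1 l

lemma c_zero_left (k : ℕ) : c 0 k = 0 := by
  cases k <;> simp [c]

lemma c_succ_succ_mul (l k : ℕ) :
    (2 * l + k + 7) * c (l + 2) (k + 1) =
      (l + k + 2) * c (l + 2) k + (l + 1) * c (l + 1) (k + 1) := by
  rw [c.eq_4]
  field_simp

lemma c_nonneg (l k : ℕ) : 0 ≤ c l k := by
  induction l, k using c.induct with
  | case1 l => rw [c_zero_right]
  | case2 k _ => rw [c_zero_left]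
  | case3 k => rw [c.eq_3]; positivity
  | case4 l k _ _ => rw [c.eq_4]; positivity

lemma c_le_geometric (l k : ℕ) : c l k ≤ 2 * 3 ^ k * (3 / 4 : ℝ) ^ l := by
  induction l, k using c.induct with
  | case1 l => rw [c_zero_right]; positivity
  | case2 k _ => rw [c_zero_left]; positivity
  | case3 k =>
    have hx : (0 : ℝ) ≤ k := k.cast_nonneg
    have hc : c 1 (k + 1) ≤ 1 := by
      rw [c.eq_3, div_le_one (by positivity)]
      nlinarith
    have : (1 : ℝ) ≤ 3 ^ (k + 1) := one_le_pow₀ (by norm_num)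
    show c 1 (k + 1) ≤ 2 * 3 ^ (k + 1) * (3 / 4) ^ 1
    linarith
  | case4 l k ih₁ ih₂ =>
    show c (l + 2) (k + 1) ≤ 2 * 3 ^ (k + 1) * (3 / 4) ^ (l + 2)
    have hpos : (0 : ℝ) < 2 * l + k + 7 := by positivity
    rw [← mul_le_mul_iff_of_pos_left hpos, c_succ_succ_mul]
    have h₁ : (l + k + 2 : ℝ) * c (l + 2) k ≤
        (2 * l + k + 7) * (2 * 3 ^ k * (3 / 4) ^ (l + 2)) :=
      mul_le_mul (by linarith) ih₁ (c_nonneg _ _) hpos.le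
    have h₂ : (l + 1 : ℝ) * c (l + 1) (k + 1) ≤
        (2 * l + k + 7) / 2 * (2 * 3 ^ (k + 1) * (3 / 4) ^ (l + 1)) :=
      mul_le_mul (by linarith) ih₂ (c_nonneg _ _) (by positivity)
    calc _ ≤ (2 * l + k + 7 : ℝ) * (2 * 3 ^ k * (3 / 4) ^ (l + 2)) +
          (2 * l + k + 7) / 2 * (2 * 3 ^ (k + 1) * (3 / 4) ^ (l + 1)) := add_le_add h₁ h₂
      _ = (2 * l + k + 7 : ℝ) * (2 * 3 ^ (k + 1) * (3 / 4) ^ (l + 2)) := by ring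

lemma c_one_boundary (k : ℕ) :
    (k + 5) * c 1 (k + 1) - (k + 1) * c 1 k = 2 * (k + 1) / (k + 3) - 2 * k / (k + 2) := by
  cases k with
  | zero => rw [c_zero_right, c.eq_3]; norm_num
  | succ k =>
    rw [c.eq_3, c.eq_3]
    push_cast
    field_simp
    ring

noncomputable def moment (p : ℝ[X]) (k : ℕ) : ℝ :=
  ∑' l : ℕ, p.eval ((l : ℝ) + 1) * c (l + 1) k

lemma summable_moment (p : ℝ[X]) (k : ℕ) :
    Summable fun l : ℕ => p.eval ((l : ℝ) + 1) * c (l + 1) k := by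
  set q := p.comp (X + 1)
  have hq : (fun l : ℕ => p.eval ((l : ℝ) + 1)) =O[atTop]
      fun l : ℕ => (l : ℝ) ^ q.natDegree := by
    have := (isBigO_atTop_of_degree_le q (X ^ q.natDegree)
      (by rw [degree_X_pow]; exact degree_le_natDegree)).comp_tendsto tendsto_natCast_atTop_atTop
    simpa [q, Function.comp_def] using this
  have hc : (fun l : ℕ => c (l + 1) k) =O[atTop] fun l : ℕ => (3 / 4 : ℝ) ^ l := by
    refine Asymptotics.IsBigO.of_bound (2 * 3 ^ k) (Eventually.of_forall fun l => ?_)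
    rw [Real.norm_of_nonneg (c_nonneg _ _), Real.norm_of_nonneg (by positivity)]
    calc c (l + 1) k ≤ 2 * 3 ^ k * (3 / 4 : ℝ) ^ (l + 1) := c_le_geometric _ _
      _ ≤ 2 * 3 ^ k * (3 / 4) ^ l :=
        mul_le_mul_of_nonneg_left (pow_le_pow_of_le_one (by norm_num) (by norm_num) l.le_succ)
          (by positivity)
  exact summable_of_isBigO_nat
    (summable_pow_mul_geometric_of_norm_lt_one q.natDegree (by norm_num)) (hq.mul hc)

lemma moment_add (p q : ℝ[X]) (k : ℕ) : moment (p + q) k = moment p k + moment q k := by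
  simp only [moment, eval_add, add_mul]
  exact (summable_moment p k).tsum_add (summable_moment q k)

lemma moment_smul (a : ℝ) (p : ℝ[X]) (k : ℕ) : moment (a • p) k = a * moment p k := by
  simp only [moment, eval_smul, smul_eq_mul, mul_assoc]
  exact tsum_mul_left

lemma moment_zero_right (p : ℝ[X]) : moment p 0 = 0 := by
  simp [moment, c_zero_right]

lemma moment_X_pow_nonneg (m k : ℕ) : 0 ≤ moment (X ^ m) k :=
  tsum_nonneg fun l => mul_nonneg (by simp only [eval_pow, eval_X]; positivity) (c_nonneg _ _)

lemma moment_X_nonneg (k : ℕ) : 0 ≤ moment X k := by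
  simpa using moment_X_pow_nonneg 1 k

lemma summable_moment_succ (p : ℝ[X]) (k : ℕ) :
    Summable fun l : ℕ => p.eval ((l : ℝ) + 2) * c (l + 2) k := by
  refine ((summable_nat_add_iff 1).mpr (summable_moment p k)).congr fun l => ?_
  simp only [Nat.cast_add, Nat.cast_one, add_assoc, one_add_one_eq_two]

lemma moment_eq_add_tsum (p : ℝ[X]) (k : ℕ) :
    moment p k = p.eval 1 * c 1 k + ∑' l : ℕ, p.eval ((l : ℝ) + 2) * c (l + 2) k := by
  rw [moment, (summable_moment p k).tsum_eq_zero_add]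
  norm_num [add_assoc, one_add_one_eq_two]

/-- The recurrence for `c`, weighted by `p` and summed over the rows; row `1`, where it does
not apply, contributes the last term. -/
theorem moment_recurrence (p : ℝ[X]) (k : ℕ) :
    2 * moment (X * p) (k + 1) + (k + 3) * moment p (k + 1) =
      moment (X * p) k + k * moment p k + moment (X * p.comp (X + 1)) (k + 1) +
        p.eval 1 * (2 * (k + 1) / (k + 3) - 2 * k / (k + 2)) := by
  rw [← c_one_boundary, ← moment_smul, ← moment_smul, ← moment_add, ← moment_smul,
    ← moment_add, moment_eq_add_tsum, moment_eq_add_tsum, moment]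
  have hB := summable_moment_succ (X * p + (k : ℝ) • p) k
  have hD := summable_moment (X * p.comp (X + 1)) (k + 1)
  have hrows :
      ∑' l : ℕ, ((2 : ℝ) • (X * p) + ((k : ℝ) + 3) • p).eval ((l : ℝ) + 2) *
          c (l + 2) (k + 1) =
      ∑' l : ℕ, (X * p + (k : ℝ) • p).eval ((l : ℝ) + 2) * c (l + 2) k +
        ∑' l : ℕ, (X * p.comp (X + 1)).eval ((l : ℝ) + 1) * c (l + 1) (k + 1) := by
    rw [← hB.tsum_add hD]
    congr 1
    funext l
    simp only [eval_add, eval_smul, eval_mul, eval_X, eval_comp, eval_one, smul_eq_mul,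
      add_assoc, one_add_one_eq_two]
    linear_combination p.eval ((l : ℝ) + 2) * c_succ_succ_mul l k
  rw [hrows]
  simp only [eval_add, eval_smul, eval_mul, eval_X, smul_eq_mul]
  ring

lemma eq_two_mul_div_of_sub_eq {a : ℕ → ℝ} (h₀ : a 0 = 0)
    (h : ∀ k : ℕ, a (k + 1) - a k = 2 * (k + 1) / (k + 3) - 2 * k / (k + 2)) (k : ℕ) :
    a k = 2 * k / (k + 2) := by
  induction k with
  | zero => simp [h₀]
  | succ k ih =>
    have := h k
    push_cast
    rw [show (k : ℝ) + 1 + 2 = k + 3 by ring]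
    linarith

lemma moment_telescope_one (k : ℕ) :
    moment X k + k * moment 1 k + 2 * ∑ j ∈ range k, moment 1 (j + 1) = 2 * k / (k + 2) := by
  revert k
  refine eq_two_mul_div_of_sub_eq ?_ fun k => ?_
  · simp [moment_zero_right]
  have h := moment_recurrence 1 k
  simp only [mul_one, one_comp, eval_one, one_mul] at h
  simp only [sum_range_succ, Nat.cast_add, Nat.cast_one]
  linarith

lemma moment_telescope_X (k : ℕ) :
    moment (X ^ 2) k + k * moment X k + ∑ j ∈ range k, moment X (j + 1) = 2 * k / (k + 2) := by
  revert k
  refine eq_two_mul_div_of_sub_eq ?_ fun k => ?_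
  · simp [moment_zero_right]
  have h := moment_recurrence X k
  rw [X_comp, show (X * X : ℝ[X]) = X ^ 2 by ring,
    show (X * (X + 1) : ℝ[X]) = X ^ 2 + X by ring, moment_add, eval_X, one_mul] at h
  simp only [sum_range_succ, Nat.cast_add, Nat.cast_one]
  linarith

lemma moment_telescope_X_sq (k : ℕ) :
    moment (X ^ 3) k + k * moment (X ^ 2) k - ∑ j ∈ range k, moment X (j + 1) =
      2 * k / (k + 2) := by
  revert k
  refine eq_two_mul_div_of_sub_eq ?_ fun k => ?_
  · simp [moment_zero_right]
  have h := moment_recurrence (X ^ 2) k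
  rw [X_pow_comp, show (X * X ^ 2 : ℝ[X]) = X ^ 3 by ring,
    show (X * (X + 1) ^ 2 : ℝ[X]) = X ^ 3 + X ^ 2 + X ^ 2 + X by ring,
    moment_add, moment_add, moment_add, eval_pow, eval_X, one_pow, one_mul] at h
  simp only [sum_range_succ, Nat.cast_add, Nat.cast_one]
  linarith

lemma two_mul_div_add_two_le_two (x : ℝ) (hx : 0 ≤ x) : 2 * x / (x + 2) ≤ 2 := by
  rw [div_le_iff₀ (by positivity)]
  linarith

lemma harmonic_cast_eq_sum (n : ℕ) :
    (harmonic n : ℝ) = ∑ j ∈ range n, 1 / ((j : ℝ) + 1) := by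
  simp [harmonic]

lemma harmonic_mono : Monotone harmonic :=
  monotone_nat_of_le_succ fun n => by
    rw [harmonic_succ, le_add_iff_nonneg_right]
    positivity

lemma sum_four_div_le (k : ℕ) : ∑ j ∈ range k, 4 / ((j : ℝ) + 3) ≤ 4 * harmonic k := by
  rw [harmonic_cast_eq_sum, mul_sum]
  exact sum_le_sum fun j _ => by rw [mul_one_div]; gcongr; linarith

lemma sum_moment_X_le_two (k : ℕ) : ∑ j ∈ range k, moment X (j + 1) ≤ 2 := by
  have h := moment_telescope_X k
  have h₁ := moment_X_pow_nonneg 2 k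
  have h₂ : 0 ≤ (k : ℝ) * moment X k := mul_nonneg k.cast_nonneg (moment_X_nonneg k)
  linarith [two_mul_div_add_two_le_two k k.cast_nonneg]

lemma mul_moment_X_sq_le (k : ℕ) : k * moment (X ^ 2) k ≤ 4 := by
  have h := moment_telescope_X_sq k
  linarith [moment_X_pow_nonneg 3 k, sum_moment_X_le_two k,
    two_mul_div_add_two_le_two k k.cast_nonneg]

lemma mul_two_sub_sum_moment_X (k : ℕ) :
    k * (2 - ∑ j ∈ range k, moment X (j + 1)) = ∑ j ∈ range k, moment X (j + 1) +
      ∑ j ∈ range k, moment (X ^ 2) (j + 1) + ∑ j ∈ range k, 4 / ((j : ℝ) + 3) := by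
  induction k with
  | zero => simp
  | succ k ih =>
    have h := moment_telescope_X (k + 1)
    have e : 2 * ((k : ℝ) + 1) / (k + 1 + 2) = 2 - 4 / (k + 3) := by field_simp; ring
    simp only [sum_range_succ, Nat.cast_add, Nat.cast_one] at h ⊢
    rw [e] at h
    linear_combination ih - h

lemma sq_mul_moment_X_le (k : ℕ) : (k : ℝ) ^ 2 * moment X k ≤ 2 + 8 * harmonic k := by
  have hk : (0 : ℝ) ≤ k := k.cast_nonneg
  have h₁ : k * moment X k ≤ 2 - ∑ j ∈ range k, moment X (j + 1) := by
    linarith [moment_telescope_X k, moment_X_pow_nonneg 2 k, two_mul_div_add_two_le_two k hk]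
  have h₂ : ∑ j ∈ range k, moment (X ^ 2) (j + 1) ≤ 4 * harmonic k := by
    rw [harmonic_cast_eq_sum, mul_sum]
    refine sum_le_sum fun j _ => ?_
    have := mul_moment_X_sq_le (j + 1)
    push_cast at this
    rw [mul_one_div, le_div_iff₀ (by positivity)]
    linarith
  calc (k : ℝ) ^ 2 * moment X k = k * (k * moment X k) := by ring
    _ ≤ k * (2 - ∑ j ∈ range k, moment X (j + 1)) := mul_le_mul_of_nonneg_left h₁ hk
    _ ≤ 2 + 8 * harmonic k := by
      rw [mul_two_sub_sum_moment_X]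
      linarith [sum_moment_X_le_two k, sum_four_div_le k]

lemma sum_mul_moment_X_le (k : ℕ) :
    ∑ j ∈ range k, ((j : ℝ) + 2) * moment X (j + 1) ≤
      2 * (2 + 8 * harmonic k) * harmonic k := by
  calc _ ≤ ∑ j ∈ range k, 2 * (2 + 8 * harmonic k) * (1 / ((j : ℝ) + 1)) := by
        refine sum_le_sum fun j hj => ?_
        have hH : (harmonic (j + 1) : ℝ) ≤ harmonic k :=
          Rat.cast_le.mpr (harmonic_mono (mem_range.mp hj))
        have h := sq_mul_moment_X_le (j + 1)
        have hM := moment_X_nonneg (j + 1)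
        push_cast at h
        have hj : (0 : ℝ) ≤ j * ((j + 1) * moment X (j + 1)) := by positivity
        rw [mul_one_div, le_div_iff₀ (by positivity)]
        nlinarith
    _ = _ := by rw [← mul_sum, ← harmonic_cast_eq_sum]

lemma mul_one_sub_sum_moment_one (k : ℕ) :
    ((k : ℝ) + 1) * (k + 2) * (1 - ∑ j ∈ range k, moment 1 (j + 1)) =
      2 + 4 * k - ∑ j ∈ range k, 4 / ((j : ℝ) + 3) +
        ∑ j ∈ range k, ((j : ℝ) + 2) * moment X (j + 1) := by
  induction k with
  | zero => norm_num
  | succ k ih =>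
    have h := moment_telescope_one (k + 1)
    have e : 2 * ((k : ℝ) + 1) / (k + 1 + 2) = 2 - 4 / (k + 3) := by field_simp; ring
    have ht : ((k : ℝ) + 3) * (4 / (k + 3)) = 4 := by field_simp
    simp only [sum_range_succ, Nat.cast_add, Nat.cast_one] at h ⊢
    rw [e] at h
    linear_combination ih - (k + 2 : ℝ) * h + ht

lemma mul_moment_one_succ_sub (k : ℕ) :
    ((k : ℝ) + 1) * (k + 2) * (k + 3) * moment 1 (k + 1) - 4 * k =
      4 * (k + 1) / (k + 3) - 2 * ∑ j ∈ range k, 4 / ((j : ℝ) + 3) +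
        2 * ∑ j ∈ range k, ((j : ℝ) + 2) * moment X (j + 1) -
          (k + 1) * (k + 2) * moment X (k + 1) := by
  have h₀ := mul_one_sub_sum_moment_one k
  have h₁ := mul_one_sub_sum_moment_one (k + 1)
  have ht : ((k : ℝ) + 3) * (4 / (k + 3)) = 4 := by field_simp
  have e : 4 * ((k : ℝ) + 1) / (k + 3) = 4 - 2 * (4 / (k + 3)) := by field_simp; ring
  simp only [sum_range_succ, Nat.cast_add, Nat.cast_one] at h₁
  rw [e]
  linear_combination (k + 3 : ℝ) * h₀ - (k + 1 : ℝ) * h₁ + ht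

lemma one_le_harmonic_succ (k : ℕ) : (1 : ℝ) ≤ harmonic (k + 1) := by
  have := harmonic_mono (Nat.le_add_left 1 k)
  rw [← Rat.cast_le (K := ℝ)] at this
  simpa [harmonic] using this

lemma abs_mul_moment_one_succ_sub_le (k : ℕ) :
    |((k : ℝ) + 1) * (k + 2) * (k + 3) * moment 1 (k + 1) - 4 * k| ≤
      44 * harmonic (k + 1) ^ 2 := by
  set L : ℝ := (harmonic (k + 1) : ℝ)
  have hL : 1 ≤ L := one_le_harmonic_succ k
  have hHL : (harmonic k : ℝ) ≤ L := Rat.cast_le.mpr (harmonic_mono k.le_succ)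
  have hH : (0 : ℝ) ≤ harmonic k := by rw [harmonic_cast_eq_sum]; positivity
  have hk : (0 : ℝ) ≤ k := k.cast_nonneg
  have hfrac : 4 * ((k : ℝ) + 1) / (k + 3) ≤ 4 := by
    rw [div_le_iff₀ (by positivity)]; linarith
  have hS : 0 ≤ ∑ j ∈ range k, 4 / ((j : ℝ) + 3) := by positivity
  have hQ : 0 ≤ ∑ j ∈ range k, ((j : ℝ) + 2) * moment X (j + 1) :=
    sum_nonneg fun j _ => mul_nonneg (by positivity) (moment_X_nonneg (j + 1))
  have hM := moment_X_nonneg (k + 1)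
  have hM' : ((k : ℝ) + 1) * (k + 2) * moment X (k + 1) ≤ 2 * (2 + 8 * L) := by
    have := sq_mul_moment_X_le (k + 1)
    push_cast at this
    nlinarith [mul_nonneg hk (mul_nonneg (by positivity : (0 : ℝ) ≤ k + 1) hM)]
  have hM'' : 0 ≤ ((k : ℝ) + 1) * (k + 2) * moment X (k + 1) := by positivity
  rw [mul_moment_one_succ_sub, abs_le]
  constructor
  · nlinarith [sum_four_div_le k, (by positivity : 0 ≤ 4 * ((k : ℝ) + 1) / (k + 3))]
  · nlinarith [sum_mul_moment_X_le k]

lemma abs_moment_one_succ_sub_le (k : ℕ) :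
    |moment 1 (k + 1) - 4 / ((k : ℝ) + 1) ^ 2| ≤
      60 * harmonic (k + 1) ^ 2 / ((k : ℝ) + 1) ^ 3 := by
  set L : ℝ := (harmonic (k + 1) : ℝ)
  set D : ℝ := ((k : ℝ) + 1) * (k + 2) * (k + 3)
  set e : ℝ := D * moment 1 (k + 1) - 4 * k
  have hk : (0 : ℝ) ≤ k := k.cast_nonneg
  have hD : ((k : ℝ) + 1) ^ 3 ≤ D := by simp only [D]; nlinarith
  have hDpos : 0 < D := by simp only [D]; positivity
  have he : |e| ≤ 44 * L ^ 2 := abs_mul_moment_one_succ_sub_le k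
  have hL : 1 ≤ L := one_le_harmonic_succ k
  have split : moment 1 (k + 1) - 4 / ((k : ℝ) + 1) ^ 2 =
      e / D - (16 * k + 24) / (((k : ℝ) + 1) ^ 2 * ((k + 2) * (k + 3))) := by
    simp only [e, D]
    field_simp
    ring
  have h₁ : |e / D| ≤ 44 * L ^ 2 / ((k : ℝ) + 1) ^ 3 := by
    rw [abs_div, abs_of_pos hDpos]
    exact div_le_div₀ (by positivity) he (by positivity) hD
  have h₂ : |(16 * k + 24) / (((k : ℝ) + 1) ^ 2 * ((k + 2) * (k + 3)))| ≤
      16 / ((k : ℝ) + 1) ^ 3 := by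
    rw [abs_of_pos (by positivity), div_le_div_iff₀ (by positivity) (by positivity)]
    nlinarith
  have h₃ : 16 / ((k : ℝ) + 1) ^ 3 ≤ 16 * L ^ 2 / ((k : ℝ) + 1) ^ 3 := by gcongr; nlinarith
  calc _ ≤ |e / D| + |(16 * k + 24) / (((k : ℝ) + 1) ^ 2 * ((k + 2) * (k + 3)))| := by
        rw [split]; exact abs_sub _ _
    _ ≤ 60 * L ^ 2 / ((k : ℝ) + 1) ^ 3 := by
        rw [show 60 * L ^ 2 = 44 * L ^ 2 + 16 * L ^ 2 by ring, add_div (44 * L ^ 2)]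
        linarith

lemma harmonic_le_three_mul_log {n : ℕ} (hn : 2 ≤ n) :
    (harmonic n : ℝ) ≤ 3 * Real.log n := by
  have h₂ : Real.log 2 ≤ Real.log n := Real.log_le_log (by norm_num) (by exact_mod_cast hn)
  linarith [harmonic_le_one_add_log n, Real.log_two_gt_d9]

/-- The column sums satisfy `∑_{l=1}^∞ c(l,k) = 4/k² + O(ln²k/k³)`: there is `C > 0`
such that `|∑_{l=1}^∞ c(l,k) − 4/k²| ≤ C·ln²k/k³` for all `k ≥ 2`. -/
theorem column_sum_asymptotics :
    ∃ C : ℝ, 0 < C ∧ ∀ k : ℕ, 2 ≤ k →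
      |(∑' l : ℕ, c (l + 1) k) - 4 / (k : ℝ) ^ 2| ≤
        C * (Real.log k) ^ 2 / (k : ℝ) ^ 3 := by
  refine ⟨540, by norm_num, fun k hk => ?_⟩
  obtain ⟨m, rfl⟩ : ∃ m, k = m + 1 := ⟨k - 1, by omega⟩
  have hsum : ∑' l : ℕ, c (l + 1) (m + 1) = moment 1 (m + 1) := by simp [moment]
  have hH : (harmonic (m + 1) : ℝ) ^ 2 ≤ 9 * Real.log (m + 1 : ℕ) ^ 2 := by
    have h₀ : (0 : ℝ) ≤ harmonic (m + 1) := by linarith [one_le_harmonic_succ m]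
    nlinarith [harmonic_le_three_mul_log hk]
  rw [hsum]
  push_cast at hH ⊢
  calc _ ≤ 60 * (harmonic (m + 1) : ℝ) ^ 2 / ((m : ℝ) + 1) ^ 3 := abs_moment_one_succ_sub_le m
    _ ≤ 540 * Real.log ((m : ℝ) + 1) ^ 2 / ((m : ℝ) + 1) ^ 3 := by gcongr ?_ / _; linarith
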